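/- arXiv:2310.11768 — 2 statements merged into one kernel-verified Lean document; each statement's English description precedes it below -/
import Mathlib

section
/- For a prime power q with characteristic not 2 or 3, the number of pairs (a,b) in F_q × F_q such that 4a^3 + 27b^2 ≠ 0 is exactly q^2 - q. -/
/-!
The singular locus `4a³ + 27b² = 0` is the cuspidal cubic, parametrized bijectively by
`t ↦ (-3t², 2t³)` with inverse `(a, b) ↦ -3b / (2a)`. Hence it has exactly `q` points, and
the nonsingular pairs are the remaining `q² - q`.
-/

section CuspidalParametrization

variable {F : Type*} [Field F]

theorem discr_cuspidalParam (t : F) : 4 * (-3 * t ^ 2) ^ 3 + 27 * (2 * t ^ 3) ^ 2 = 0 := by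
  ring

theorem cuspidalParam_injective (h2 : (2 : F) ≠ 0) (h3 : (3 : F) ≠ 0) :
    Function.Injective fun t : F => ((-3 * t ^ 2, 2 * t ^ 3) : F × F) := by
  intro s t hst
  simp only [Prod.mk.injEq] at hst
  obtain ⟨hsq, hcube⟩ := hst
  have hsq' : s ^ 2 = t ^ 2 := mul_left_cancel₀ (neg_ne_zero.mpr h3) hsq
  have hcube' : s ^ 3 = t ^ 3 := mul_left_cancel₀ h2 hcube
  rcases eq_or_ne t 0 with rfl | ht
  · simpa using hcube'
  have : s * t ^ 2 = t * t ^ 2 := by linear_combination hcube' - s * hsq'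
  exact mul_right_cancel₀ (pow_ne_zero 2 ht) this

/-- The witness is `t = -3b / (2a)`; when `a = 0` also `b = 0`, so the junk value `t = 0` is
the right one. -/
theorem exists_cuspidalParam_of_discr_eq_zero (h2 : (2 : F) ≠ 0) (h3 : (3 : F) ≠ 0)
    {a b : F} (hab : 4 * a ^ 3 + 27 * b ^ 2 = 0) : ∃ t : F, -3 * t ^ 2 = a ∧ 2 * t ^ 3 = b := by
  rcases eq_or_ne a 0 with rfl | ha
  · have h27 : (27 : F) ≠ 0 := by
      rw [show (27 : F) = 3 ^ 3 by norm_num]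
      exact pow_ne_zero 3 h3
    have hb : b = 0 := pow_eq_zero_iff two_ne_zero |>.mp
      ((mul_eq_zero.mp (by linear_combination hab : (27 : F) * b ^ 2 = 0)).resolve_left h27)
    exact ⟨0, by simp [hb]⟩
  refine ⟨-3 * b / (2 * a), ?_, ?_⟩
  · field_simp
    linear_combination (-1 : F) * hab
  · field_simp
    linear_combination (-b : F) * hab

theorem card_discr_eq_zero [Fintype F] [DecidableEq F] (h2 : (2 : F) ≠ 0) (h3 : (3 : F) ≠ 0) :
    (Finset.univ.filter fun ab : F × F => 4 * ab.1 ^ 3 + 27 * ab.2 ^ 2 = 0).card =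
      Fintype.card F := by
  have hsing : (Finset.univ.filter fun ab : F × F => 4 * ab.1 ^ 3 + 27 * ab.2 ^ 2 = 0) =
      Finset.univ.image fun t : F => ((-3 * t ^ 2, 2 * t ^ 3) : F × F) := by
    ext ⟨a, b⟩
    simp only [Finset.mem_filter, Finset.mem_univ, true_and, Finset.mem_image, Prod.mk.injEq]
    constructor
    · exact exists_cuspidalParam_of_discr_eq_zero h2 h3
    · rintro ⟨t, rfl, rfl⟩
      exact discr_cuspidalParam t
  rw [hsing, Finset.card_image_of_injective _ (cuspidalParam_injective h2 h3), Finset.card_univ]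

end CuspidalParametrization

theorem stmt_0 (F : Type*) [Field F] [Fintype F]
    (h2 : ringChar F ≠ 2) (h3 : ringChar F ≠ 3) :
    Nat.card {ab : F × F | 4 * ab.1 ^ 3 + 27 * ab.2 ^ 2 ≠ 0} =
      Fintype.card F ^ 2 - Fintype.card F := by
  classical
  have h2' : (2 : F) ≠ 0 := Ring.two_ne_zero h2
  have h3' : (3 : F) ≠ 0 := mod_cast CharP.cast_ne_zero_of_ne_of_prime F Nat.prime_three h3
  rw [Set.coe_ofPred, Nat.card_eq_fintype_card, Fintype.card_subtype, Finset.filter_not,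
    Finset.card_sdiff_of_subset (Finset.filter_subset _ _), card_discr_eq_zero h2' h3',
    Finset.card_univ, Fintype.card_prod, sq]
end

section
/- Let n = p1 · p2 · ... · pl be a squarefree odd integer coprime to 6, with distinct primes pi. The number of pairs (a,b) in Z/nZ × Z/nZ with 4a^3 + 27b^2 a unit in Z/nZ equals the product over i of the number of pairs (a_i, b_i) in Z/p_i Z × Z/p_i Z with 4a_i^3 + 27b_i^2 ≠ 0; in particular it equals φ(n^2). -/
/-!
By the Chinese remainder theorem `ZMod n ≃+* Π i, ZMod pᵢ`, and an element of a product ring is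
a unit iff each component is, i.e. iff each component is nonzero in the field `ZMod pᵢ`.
Over a field in which `6 ≠ 0`, the zero locus of `4a³ + 27b²` is a cuspidal cubic, in bijection
with the field through `t ↦ (-3t², 2t³)`; so it has `p` points and its complement has
`p² - p = φ(p²)`. Multiplicativity of `φ` turns the product into `φ(n²)`.
-/

open scoped Nat Function

def unitDiscrPairs (R : Type*) [CommRing R] : Set (R × R) :=
  {ab | IsUnit (4 * ab.1 ^ 3 + 27 * ab.2 ^ 2)}

section UnitDiscrPairs

variable {R S : Type*} [CommRing R] [CommRing S]

def RingEquiv.unitDiscrPairsEquiv (e : R ≃+* S) : unitDiscrPairs R ≃ unitDiscrPairs S :=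
  (e.toEquiv.prodCongr e.toEquiv).subtypeEquiv fun ab => by
    simp [unitDiscrPairs, ← isUnit_map_iff e (4 * ab.1 ^ 3 + 27 * ab.2 ^ 2), map_ofNat]

def unitDiscrPairsPiEquiv {ι : Type*} (R : ι → Type*) [∀ i, CommRing (R i)] :
    unitDiscrPairs (Π i, R i) ≃ Π i, unitDiscrPairs (R i) :=
  ((Equiv.arrowProdEquivProdArrow ι R R).symm.subtypeEquiv fun ab => by
    simp [unitDiscrPairs, Pi.isUnit_iff]).trans Equiv.subtypePiEquivPi

theorem unitDiscrPairs_eq_setOf_ne_zero (K : Type*) [Field K] :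
    unitDiscrPairs K = {ab | 4 * ab.1 ^ 3 + 27 * ab.2 ^ 2 ≠ 0} := by
  simp [unitDiscrPairs, isUnit_iff_ne_zero]

end UnitDiscrPairs

section Field

variable {K : Type*} [Field K]

theorem two_ne_zero_and_three_ne_zero_of_six_ne_zero (h6 : (6 : K) ≠ 0) :
    (2 : K) ≠ 0 ∧ (3 : K) ≠ 0 :=
  ⟨left_ne_zero_of_mul (b := 3) (by norm_num [h6]),
    right_ne_zero_of_mul (a := 2) (by norm_num [h6])⟩

def equivDiscrEqZero (h6 : (6 : K) ≠ 0) :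
    K ≃ {ab : K × K // 4 * ab.1 ^ 3 + 27 * ab.2 ^ 2 = 0} where
  toFun t := ⟨(-3 * t ^ 2, 2 * t ^ 3), by ring⟩
  invFun ab := -3 * ab.1.2 / (2 * ab.1.1)
  left_inv t := by
    obtain ⟨h2, h3⟩ := two_ne_zero_and_three_ne_zero_of_six_ne_zero h6
    rcases eq_or_ne t 0 with rfl | ht
    · simp
    · field_simp
  right_inv := by
    rintro ⟨⟨a, b⟩, h⟩
    obtain ⟨h2, h3⟩ := two_ne_zero_and_three_ne_zero_of_six_ne_zero h6
    rcases eq_or_ne a 0 with rfl | ha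
    · have h27 : (27 : K) ≠ 0 := by
        rw [show (27 : K) = 3 ^ 3 by norm_num]
        exact pow_ne_zero 3 h3
      have hb : b = 0 := by simpa [h27] using h
      simp [hb]
    · ext
      · field_simp
        linear_combination -h
      · field_simp
        linear_combination (-b) * h

theorem card_discr_ne_zero [Fintype K] (h6 : (6 : K) ≠ 0) :
    Nat.card {ab : K × K | 4 * ab.1 ^ 3 + 27 * ab.2 ^ 2 ≠ 0} = Nat.card K ^ 2 - Nat.card K := by
  classical
  rw [Set.coe_ofPred, Nat.card_eq_fintype_card, Fintype.card_subtype_compl,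
    ← Nat.card_eq_fintype_card, ← Nat.card_eq_fintype_card, Nat.card_prod,
    ← Nat.card_congr (equivDiscrEqZero h6), sq]

end Field

theorem ZMod.card_discr_ne_zero_eq_totient {p : ℕ} [Fact p.Prime] (hp : p.Coprime 6) :
    Nat.card {ab : ZMod p × ZMod p | 4 * ab.1 ^ 3 + 27 * ab.2 ^ 2 ≠ 0} = φ (p ^ 2) := by
  have h6 : (6 : ZMod p) ≠ 0 := by
    exact_mod_cast ((ZMod.isUnit_iff_coprime 6 p).mpr hp.symm).ne_zero
  rw [card_discr_ne_zero h6, Nat.card_zmod, Nat.totient_prime_pow_succ Fact.out, pow_one, sq,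
    Nat.mul_sub_one]

theorem Nat.totient_finset_prod {ι : Type*} (s : Finset ι) (f : ι → ℕ)
    (h : (s : Set ι).Pairwise (Nat.Coprime on f)) :
    φ (∏ i ∈ s, f i) = ∏ i ∈ s, φ (f i) := by
  classical
  induction s using Finset.induction_on with
  | empty => simp
  | insert a s ha ih =>
    rw [Finset.coe_insert, Set.pairwise_insert_of_symm] at h
    rw [Finset.prod_insert ha, Finset.prod_insert ha, Nat.totient_mul, ih h.1]
    exact Nat.Coprime.prod_right fun i hi => h.2 i hi (ne_of_mem_of_not_mem hi ha).symm

theorem stmt_15 (l : ℕ) (ps : Fin l → ℕ) (hps : ∀ i, (ps i).Prime)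
    (hinj : Function.Injective ps) (n : ℕ) (hn : n = ∏ i, ps i)
    (hcop : Nat.gcd n 6 = 1) :
    Nat.card {ab : ZMod n × ZMod n | IsUnit (4 * ab.1 ^ 3 + 27 * ab.2 ^ 2)} =
      ∏ i, Nat.card {ab : ZMod (ps i) × ZMod (ps i) |
        4 * ab.1 ^ 3 + 27 * ab.2 ^ 2 ≠ 0} ∧
    Nat.card {ab : ZMod n × ZMod n | IsUnit (4 * ab.1 ^ 3 + 27 * ab.2 ^ 2)} =
      Nat.totient (n ^ 2) := by
  have : ∀ i, Fact (ps i).Prime := fun i => ⟨hps i⟩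
  have hps6 : ∀ i, (ps i).Coprime 6 := fun i =>
    Nat.Coprime.coprime_dvd_left (hn ▸ Finset.dvd_prod_of_mem ps (Finset.mem_univ i)) hcop
  have hpair : Pairwise (Nat.Coprime on ps) := fun i j hij =>
    (Nat.coprime_primes (hps i) (hps j)).mpr (hinj.ne hij)
  have hcrt : Nat.card (unitDiscrPairs (ZMod n)) =
      ∏ i, Nat.card {ab : ZMod (ps i) × ZMod (ps i) | 4 * ab.1 ^ 3 + 27 * ab.2 ^ 2 ≠ 0} := by
    subst hn
    rw [Nat.card_congr ((ZMod.prodEquivPi ps hpair).unitDiscrPairsEquiv.trans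
      (unitDiscrPairsPiEquiv _)), Nat.card_pi]
    simp only [unitDiscrPairs_eq_setOf_ne_zero]
  refine ⟨hcrt, hcrt.trans ?_⟩
  rw [hn, ← Finset.prod_pow,
    Nat.totient_finset_prod _ _ fun i _ j _ hij => (hpair hij).pow 2 2]
  exact Finset.prod_congr rfl fun i _ => ZMod.card_discr_ne_zero_eq_totient (hps6 i)
end
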